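/- arXiv:2402.10242 — 3 statements merged into one kernel-verified Lean document; each statement's English description precedes it below -/
import Mathlib

section
/- Let U, Û ∈ ℝ^{n×K} have orthonormal columns, let U^TÛ = U_H Λ_H V_H^T be a singular value decomposition of U^TÛ, and set W_U = U_H V_H^T (an orthogonal K×K matrix). Then ‖U^TÛ − W_U‖ ≤ ‖sinΘ(U,Û)‖², where ‖·‖ is the spectral norm and ‖sinΘ(U,Û)‖ = √(1 − σ_K²) with σ_K the smallest singular value of U^TÛ. -/
open Matrix

noncomputable section

namespace SGRDPG

/-- Squared Euclidean norm of a vector. -/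
def sqnorm {d : ℕ} (x : Fin d → ℝ) : ℝ := ∑ j, (x j) ^ 2

/-- Euclidean norm of a vector. -/
def enorm {d : ℕ} (x : Fin d → ℝ) : ℝ := Real.sqrt (sqnorm x)

/-- Spectral (operator) norm of a matrix. -/
def spec {a b : ℕ} (A : Matrix (Fin a) (Fin b) ℝ) : ℝ :=
  sSup {c | ∃ x : Fin b → ℝ, sqnorm x ≤ 1 ∧ c = enorm (A.mulVec x)}

/-- Smallest singular value of a matrix. -/
def sigMin {a b : ℕ} (A : Matrix (Fin a) (Fin b) ℝ) : ℝ :=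
  sInf {c | ∃ x : Fin b → ℝ, sqnorm x = 1 ∧ c = enorm (A.mulVec x)}

/-- `U` has orthonormal columns. -/
def Ortho {a b : ℕ} (U : Matrix (Fin a) (Fin b) ℝ) : Prop := Uᵀ * U = 1

/-- The operator-norm `sinΘ` distance, `‖sinΘ(U,V)‖ = √(1 - σ_K(UᵀV)²)`. -/
def sinOp {n a b : ℕ} (U : Matrix (Fin n) (Fin a) ℝ) (V : Matrix (Fin n) (Fin b) ℝ) : ℝ :=
  Real.sqrt (1 - (sigMin (Uᵀ * V)) ^ 2)

/-!
Write `H = UᵀÛ = U_H Λ V_Hᵀ`. Then `H - W_U = U_H (Λ - 1) V_Hᵀ`, so its spectral norm is at most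
`maxᵢ |1 - Λᵢ|`. Since `H` is a contraction, every singular value satisfies `σ_K ≤ Λᵢ ≤ 1`, and
`1 - Λᵢ ≤ 1 - σ_K² = ‖sinΘ(U,Û)‖²` because `σ_K² ≤ Λᵢ² ≤ Λᵢ`.
-/

lemma sqnorm_nonneg {d : ℕ} (x : Fin d → ℝ) : 0 ≤ sqnorm x :=
  Finset.sum_nonneg fun _ _ => sq_nonneg _

lemma sqnorm_eq_dotProduct {d : ℕ} (x : Fin d → ℝ) : sqnorm x = x ⬝ᵥ x := by
  simp [sqnorm, dotProduct, sq]

lemma sqnorm_single {d : ℕ} (i : Fin d) (c : ℝ) : sqnorm (Pi.single i c) = c ^ 2 := by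
  simp [sqnorm, Pi.single_apply]

lemma enorm_le_of_sqnorm_le_sq {d : ℕ} {x : Fin d → ℝ} {c : ℝ} (hc : 0 ≤ c)
    (h : sqnorm x ≤ c ^ 2) : enorm x ≤ c :=
  Real.sqrt_le_iff.mpr ⟨hc, h⟩

lemma Ortho.sqnorm_mulVec {a b : ℕ} {U : Matrix (Fin a) (Fin b) ℝ} (hU : Ortho U)
    (x : Fin b → ℝ) : sqnorm (U *ᵥ x) = sqnorm x := by
  rw [sqnorm_eq_dotProduct, sqnorm_eq_dotProduct, dotProduct_mulVec, ← mulVec_transpose,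
    mulVec_mulVec, hU, one_mulVec]

lemma Ortho.sqnorm_transpose_mulVec_le {a b : ℕ} {U : Matrix (Fin a) (Fin b) ℝ} (hU : Ortho U)
    (y : Fin a → ℝ) : sqnorm (Uᵀ *ᵥ y) ≤ sqnorm y := by
  set z := Uᵀ *ᵥ y
  have hyz : y ⬝ᵥ (U *ᵥ z) = sqnorm z := by
    rw [dotProduct_mulVec, ← mulVec_transpose, sqnorm_eq_dotProduct]
  have hcs : (y ⬝ᵥ (U *ᵥ z)) ^ 2 ≤ sqnorm y * sqnorm (U *ᵥ z) := by
    simpa [sqnorm, dotProduct] using Finset.sum_mul_sq_le_sq_mul_sq Finset.univ y (U *ᵥ z)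
  rw [hyz, hU.sqnorm_mulVec] at hcs
  nlinarith [sqnorm_nonneg z, sqnorm_nonneg y]

lemma Ortho.sqnorm_transpose_mul_mulVec_le {n a b : ℕ} {U : Matrix (Fin n) (Fin a) ℝ}
    {V : Matrix (Fin n) (Fin b) ℝ} (hU : Ortho U) (hV : Ortho V) (x : Fin b → ℝ) :
    sqnorm ((Uᵀ * V) *ᵥ x) ≤ sqnorm x := by
  rw [← mulVec_mulVec, ← hV.sqnorm_mulVec x]
  exact hU.sqnorm_transpose_mulVec_le _

lemma sqnorm_diagonal_mulVec_le {d : ℕ} {D : Fin d → ℝ} {c : ℝ} (hD : ∀ i, |D i| ≤ c)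
    (x : Fin d → ℝ) : sqnorm (diagonal D *ᵥ x) ≤ c ^ 2 * sqnorm x := by
  rw [sqnorm, sqnorm, Finset.mul_sum]
  refine Finset.sum_le_sum fun i _ => ?_
  rw [mulVec_diagonal, mul_pow]
  exact mul_le_mul_of_nonneg_right (sq_le_sq' (abs_le.mp (hD i)).1 (abs_le.mp (hD i)).2)
    (sq_nonneg _)

lemma spec_le {a b : ℕ} {A : Matrix (Fin a) (Fin b) ℝ} {c : ℝ} (hc : 0 ≤ c)
    (hA : ∀ x, sqnorm (A *ᵥ x) ≤ c ^ 2 * sqnorm x) : spec A ≤ c := by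
  refine Real.sSup_le ?_ hc
  rintro _ ⟨x, hx, rfl⟩
  exact enorm_le_of_sqnorm_le_sq hc ((hA x).trans (by nlinarith))

lemma sigMin_nonneg {a b : ℕ} (A : Matrix (Fin a) (Fin b) ℝ) : 0 ≤ sigMin A :=
  Real.sInf_nonneg fun _ ⟨_, _, hc⟩ => hc ▸ Real.sqrt_nonneg _

lemma sigMin_le_enorm_mulVec {a b : ℕ} (A : Matrix (Fin a) (Fin b) ℝ) {x : Fin b → ℝ}
    (hx : sqnorm x = 1) : sigMin A ≤ enorm (A *ᵥ x) :=
  csInf_le ⟨0, fun _ ⟨_, _, hc⟩ => hc ▸ Real.sqrt_nonneg _⟩ ⟨x, hx, rfl⟩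

lemma sigMin_le_one {a b : ℕ} {A : Matrix (Fin a) (Fin b) ℝ}
    (hA : ∀ x, sqnorm (A *ᵥ x) ≤ sqnorm x) : sigMin A ≤ 1 := by
  rcases Set.eq_empty_or_nonempty
      {c | ∃ x : Fin b → ℝ, sqnorm x = 1 ∧ c = enorm (A *ᵥ x)} with h | ⟨_, x, hx, -⟩
  · rw [sigMin, h, Real.sInf_empty]
    exact zero_le_one
  · exact (sigMin_le_enorm_mulVec A hx).trans
      (enorm_le_of_sqnorm_le_sq zero_le_one (by rw [one_pow, ← hx]; exact hA x))

section SVD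

variable {K : ℕ} {H UH VH : Matrix (Fin K) (Fin K) ℝ} {Λ : Fin K → ℝ}

lemma enorm_mulVec_rightSingularVector (hUH : Ortho UH) (hVH : Ortho VH) (hΛ : ∀ i, 0 ≤ Λ i)
    (hSVD : H = UH * diagonal Λ * VHᵀ) (i : Fin K) :
    enorm (H *ᵥ (VH *ᵥ Pi.single i 1)) = Λ i := by
  have hHv : H *ᵥ (VH *ᵥ Pi.single i 1) = UH *ᵥ Pi.single i (Λ i) := by
    rw [hSVD, mulVec_mulVec, Matrix.mul_assoc (UH * diagonal Λ), hVH, Matrix.mul_one,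
      ← mulVec_mulVec, mulVec_single_one, col_diagonal]
  rw [hHv, enorm, hUH.sqnorm_mulVec, sqnorm_single, Real.sqrt_sq (hΛ i)]

lemma sigMin_le_singularValue (hUH : Ortho UH) (hVH : Ortho VH) (hΛ : ∀ i, 0 ≤ Λ i)
    (hSVD : H = UH * diagonal Λ * VHᵀ) (i : Fin K) : sigMin H ≤ Λ i := by
  rw [← enorm_mulVec_rightSingularVector hUH hVH hΛ hSVD i]
  exact sigMin_le_enorm_mulVec H (by rw [hVH.sqnorm_mulVec, sqnorm_single, one_pow])

lemma singularValue_le_one (hUH : Ortho UH) (hVH : Ortho VH) (hΛ : ∀ i, 0 ≤ Λ i)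
    (hSVD : H = UH * diagonal Λ * VHᵀ) (hH : ∀ x, sqnorm (H *ᵥ x) ≤ sqnorm x) (i : Fin K) :
    Λ i ≤ 1 := by
  rw [← enorm_mulVec_rightSingularVector hUH hVH hΛ hSVD i]
  refine enorm_le_of_sqnorm_le_sq zero_le_one ((hH _).trans ?_)
  rw [hVH.sqnorm_mulVec, sqnorm_single, one_pow]

lemma spec_sub_polarFactor_le (hUH : Ortho UH) (hVH : Ortho VH)
    (hSVD : H = UH * diagonal Λ * VHᵀ) {c : ℝ} (hc : 0 ≤ c) (hΛ : ∀ i, |Λ i - 1| ≤ c) :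
    spec (H - UH * VHᵀ) ≤ c := by
  have hdiff : H - UH * VHᵀ = UH * diagonal (Λ - 1) * VHᵀ := by
    have hdiag : diagonal (Λ - 1) = diagonal Λ - 1 := by rw [← diagonal_one', diagonal_sub]; rfl
    rw [hSVD, hdiag]
    noncomm_ring
  refine spec_le hc fun x => ?_
  rw [hdiff, ← mulVec_mulVec, ← mulVec_mulVec, hUH.sqnorm_mulVec]
  calc sqnorm (diagonal (Λ - 1) *ᵥ (VHᵀ *ᵥ x)) ≤ c ^ 2 * sqnorm (VHᵀ *ᵥ x) :=
        sqnorm_diagonal_mulVec_le (D := Λ - 1) hΛ _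
    _ ≤ c ^ 2 * sqnorm x := by gcongr; exact hVH.sqnorm_transpose_mulVec_le x

end SVD

theorem procrustes_alignment_bound_general
    (n K : ℕ) (U Uh : Matrix (Fin n) (Fin K) ℝ)
    (hU : Ortho U) (hUh : Ortho Uh)
    -- an SVD of UᵀÛ
    (UH VH : Matrix (Fin K) (Fin K) ℝ) (Λ : Fin K → ℝ)
    (hUH : Ortho UH)
    (hVH : Ortho VH)
    (hΛ : ∀ i, 0 ≤ Λ i)
    (hSVD : Uᵀ * Uh = UH * Matrix.diagonal Λ * VHᵀ) :
    spec (Uᵀ * Uh - UH * VHᵀ) ≤ (sinOp U Uh) ^ 2 := by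
  have hcontr := hU.sqnorm_transpose_mul_mulVec_le hUh
  have hσ0 := sigMin_nonneg (Uᵀ * Uh)
  have hσ1 := sigMin_le_one hcontr
  rw [sinOp, Real.sq_sqrt (by nlinarith)]
  refine spec_sub_polarFactor_le hUH hVH hSVD (by nlinarith) fun i => ?_
  have hσΛ := sigMin_le_singularValue hUH hVH hΛ hSVD i
  have hΛ1 := singularValue_le_one hUH hVH hΛ hSVD hcontr i
  rw [abs_sub_comm, abs_of_nonneg (by linarith)]
  nlinarith

/-- **Lemma: the Procrustes alignment matrix `W_U` is close to `UᵀÛ`.**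
Let `U, Û ∈ O_{n,K}`, let `UᵀÛ = U_H Λ_H V_Hᵀ` be an SVD of `UᵀÛ`, and set
`W_U = U_H V_Hᵀ`.  Then `‖UᵀÛ - W_U‖ ≤ ‖sinΘ(U,Û)‖²`. -/
theorem procrustes_alignment_bound
    (n K : ℕ) (U Uh : Matrix (Fin n) (Fin K) ℝ)
    (hU : Ortho U) (hUh : Ortho Uh)
    -- an SVD of UᵀÛ
    (UH VH : Matrix (Fin K) (Fin K) ℝ) (Λ : Fin K → ℝ)
    (hUH : Ortho UH) (hUH' : UH * UHᵀ = 1)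
    (hVH : Ortho VH) (hVH' : VH * VHᵀ = 1)
    (hΛ : ∀ i, 0 ≤ Λ i)
    (hSVD : Uᵀ * Uh = UH * Matrix.diagonal Λ * VHᵀ) :
    spec (Uᵀ * Uh - UH * VHᵀ) ≤ (sinOp U Uh) ^ 2 :=
  procrustes_alignment_bound_general n K U Uh hU hUh UH VH Λ hUH hVH hΛ hSVD

end SGRDPG
end
end

section
/- Let K ≥ 2, let X ∈ ℝ^{n×K} satisfy X·1_K = 1_n, and let B ∈ ℝ^{K×K} be symmetric. Let X̆ ∈ ℝ^{n×(K−1)} consist of the first K−1 columns of X, and let J = [I_{K−1} | −1_{K−1}] ∈ ℝ^{(K−1)×K} (the identity of size K−1 with an appended column of −1's). Then, with Π = n^{−1}·1_n1_n^T and Π^⊥ = I_n − Π: (i) Π^⊥·X·B·X^T·Π^⊥ = (Π^⊥X̆)·(J·B·J^T)·(Π^⊥X̆)^T; and (ii) all singular values of J lie in the interval [1, √K]. -/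
/-!
Since the rows of `X` sum to one, `X̆ J` differs from `X` only by a matrix with constant columns,
which `Π^⊥` annihilates; so `Π^⊥ X = Π^⊥ X̆ J`, and (i) follows because `Π^⊥` is symmetric.
For (ii), `‖Jᵀ y‖² = ‖y‖² + (∑ yᵢ)² ≥ ‖y‖²`, while `‖J x‖² = ∑ᵢ (xᵢ - x_K)² ≤ K ‖x‖²`
by Cauchy–Schwarz.
-/

open Matrix

noncomputable section

namespace SGRDPG

/-- `Π^⊥ = Iₙ - n⁻¹ 1ₙ1ₙᵀ`. -/
def Piperp (n : ℕ) : Matrix (Fin n) (Fin n) ℝ :=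
  1 - ((n : ℝ))⁻¹ • Matrix.of fun _ _ => (1 : ℝ)

lemma spec_le_sqrt_of_sqnorm_mulVec_le {a b : ℕ} {A : Matrix (Fin a) (Fin b) ℝ} {c : ℝ}
    (hc : 0 ≤ c) (h : ∀ x, sqnorm (A *ᵥ x) ≤ c * sqnorm x) : spec A ≤ √c := by
  refine Real.sSup_le ?_ (Real.sqrt_nonneg c)
  rintro _ ⟨x, hx, rfl⟩
  exact Real.sqrt_le_sqrt ((h x).trans (mul_le_of_le_one_right hc hx))

lemma sqrt_le_sigMin_of_le_sqnorm_mulVec {a b : ℕ} {A : Matrix (Fin a) (Fin b) ℝ} {c : ℝ}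
    (hb : 0 < b) (h : ∀ x, c * sqnorm x ≤ sqnorm (A *ᵥ x)) : √c ≤ sigMin A := by
  have hunit : sqnorm (Pi.single (⟨0, hb⟩ : Fin b) (1 : ℝ)) = 1 := by
    simp [sqnorm, Pi.single_apply, ite_pow]
  refine le_csInf ⟨_, _, hunit, rfl⟩ ?_
  rintro _ ⟨x, hx, rfl⟩
  simpa [enorm, hx] using Real.sqrt_le_sqrt (h x)

lemma piperp_mulVec_one (n : ℕ) : Piperp n *ᵥ (fun _ => (1 : ℝ)) = 0 := by
  ext i
  have hn : (n : ℝ) ≠ 0 := Nat.cast_ne_zero.mpr (Fin.pos i).ne'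
  simp [Piperp, mulVec, dotProduct, one_apply, hn]

lemma piperp_transpose (n : ℕ) : (Piperp n)ᵀ = Piperp n := by
  rw [Piperp, transpose_sub, transpose_one, transpose_smul]
  rfl

/-- The paper's `J = [I_{K-1} | -1_{K-1}]`, for `K = m + 1`. -/
def diffLast (m : ℕ) : Matrix (Fin m) (Fin (m + 1)) ℝ :=
  Matrix.of fun i j => if (j : ℕ) = (i : ℕ) then 1 else if (j : ℕ) = m then -1 else 0

variable {m : ℕ}

@[simp]
lemma diffLast_castSucc (i j : Fin m) :
    diffLast m i j.castSucc = (1 : Matrix (Fin m) (Fin m) ℝ) i j := by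
  simp [diffLast, one_apply, Fin.val_eq_val, eq_comm, j.isLt.ne']

@[simp]
lemma diffLast_last (i : Fin m) : diffLast m i (Fin.last m) = -1 := by
  simp [diffLast, i.isLt.ne']

lemma diffLast_mulVec_apply (x : Fin (m + 1) → ℝ) (i : Fin m) :
    (diffLast m *ᵥ x) i = x i.castSucc - x (Fin.last m) := by
  simp [mulVec, dotProduct, Fin.sum_univ_castSucc, one_apply, sub_eq_add_neg]

lemma vecMul_diffLast_castSucc (y : Fin m → ℝ) (j : Fin m) :
    (y ᵥ* diffLast m) j.castSucc = y j := by
  simp [vecMul, dotProduct, one_apply]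

lemma vecMul_diffLast_last (y : Fin m → ℝ) :
    (y ᵥ* diffLast m) (Fin.last m) = -∑ i, y i := by
  simp [vecMul, dotProduct]

lemma sqnorm_diffLast_mulVec_le (x : Fin (m + 1) → ℝ) :
    sqnorm (diffLast m *ᵥ x) ≤ (m + 1) * sqnorm x := by
  set t := x (Fin.last m)
  set S := ∑ i : Fin m, x i.castSucc
  have hx : sqnorm x = ∑ i : Fin m, x i.castSucc ^ 2 + t ^ 2 := Fin.sum_univ_castSucc _
  have hJx : sqnorm (diffLast m *ᵥ x) = ∑ i : Fin m, x i.castSucc ^ 2 - 2 * t * S + m * t ^ 2 := by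
    have hsq : ∀ i : Fin m,
        (x i.castSucc - t) ^ 2 = x i.castSucc ^ 2 - 2 * t * x i.castSucc + t ^ 2 := fun i => by ring
    simp only [sqnorm, diffLast_mulVec_apply, hsq, Finset.sum_add_distrib, Finset.sum_sub_distrib,
      ← Finset.mul_sum, Finset.sum_const, Finset.card_univ, Fintype.card_fin, nsmul_eq_mul, S, t]
  have hCS : S ^ 2 ≤ m * ∑ i : Fin m, x i.castSucc ^ 2 := by
    simpa using sq_sum_le_card_mul_sum_sq (s := Finset.univ) (f := fun i : Fin m => x i.castSucc)
  -- the gap `(m + 1)‖x‖² - ‖Jx‖²` dominates `S² + 2tS + t² = (S + t)²` by Cauchy–Schwarz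
  rw [hJx, hx]
  nlinarith [sq_nonneg (S + t)]

lemma sqnorm_transpose_diffLast_mulVec (y : Fin m → ℝ) :
    sqnorm ((diffLast m)ᵀ *ᵥ y) = sqnorm y + (∑ i, y i) ^ 2 := by
  simp only [sqnorm, mulVec_transpose, Fin.sum_univ_castSucc, vecMul_diffLast_castSucc,
    vecMul_diffLast_last, neg_sq]

lemma submatrix_castSucc_mul_diffLast {n : ℕ} (X : Matrix (Fin n) (Fin (m + 1)) ℝ) :
    X.submatrix id Fin.castSucc * diffLast m =
      X - vecMulVec (X *ᵥ fun _ => 1) (Pi.single (Fin.last m) 1) := by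
  ext i j
  rw [mul_apply_eq_vecMul]
  cases j using Fin.lastCases with
  | last =>
    simp [vecMul_diffLast_last, vecMulVec_apply, mulVec, dotProduct, Fin.sum_univ_castSucc]
  | cast j => simp [vecMul_diffLast_castSucc, vecMulVec_apply, Fin.castSucc_ne_last]

lemma spec_diffLast_le (m : ℕ) : spec (diffLast m) ≤ √(m + 1 : ℕ) := by
  rw [Nat.cast_succ]
  exact spec_le_sqrt_of_sqnorm_mulVec_le (by positivity) sqnorm_diffLast_mulVec_le

lemma one_le_sigMin_transpose_diffLast (hm : 0 < m) : 1 ≤ sigMin (diffLast m)ᵀ := by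
  rw [← Real.sqrt_one]
  refine sqrt_le_sigMin_of_le_sqnorm_mulVec hm fun y => ?_
  rw [sqnorm_transpose_diffLast_mulVec, one_mul]
  exact le_add_of_nonneg_right (sq_nonneg _)

lemma piperp_mul_submatrix_castSucc_mul_diffLast {n : ℕ} {X : Matrix (Fin n) (Fin (m + 1)) ℝ}
    (hrow : X *ᵥ (fun _ => 1) = fun _ => 1) :
    Piperp n * X.submatrix id Fin.castSucc * diffLast m = Piperp n * X := by
  rw [Matrix.mul_assoc, submatrix_castSucc_mul_diffLast, Matrix.mul_sub, mul_vecMulVec, hrow,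
    piperp_mulVec_one, zero_vecMulVec, sub_zero]

lemma piperp_conj_eq_diffLast_conj {n : ℕ} {X : Matrix (Fin n) (Fin (m + 1)) ℝ}
    (hrow : X *ᵥ (fun _ => 1) = fun _ => 1) (B : Matrix (Fin (m + 1)) (Fin (m + 1)) ℝ) :
    Piperp n * (X * B * Xᵀ) * Piperp n =
      (Piperp n * X.submatrix id Fin.castSucc) * (diffLast m * B * (diffLast m)ᵀ) *
        (Piperp n * X.submatrix id Fin.castSucc)ᵀ := by
  calc Piperp n * (X * B * Xᵀ) * Piperp n = (Piperp n * X) * B * (Piperp n * X)ᵀ := by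
        rw [transpose_mul, piperp_transpose]
        simp only [Matrix.mul_assoc]
    _ = _ := by
        rw [← piperp_mul_submatrix_castSucc_mul_diffLast hrow, transpose_mul, transpose_mul]
        simp only [Matrix.mul_assoc]

theorem membership_reduction_general
    (n K : ℕ) (hK : 2 ≤ K)
    (X : Matrix (Fin n) (Fin K) ℝ)
    (hrow : X.mulVec (fun _ => (1 : ℝ)) = fun _ => (1 : ℝ))
    (B : Matrix (Fin K) (Fin K) ℝ) :
    -- X̆ : the first K-1 columns of X;  J = [I_{K-1} | -1_{K-1}]
    (Piperp n * (X * B * Xᵀ) * Piperp n =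
      (Piperp n * Matrix.of fun i (j : Fin (K - 1)) => X i (Fin.castLE (Nat.sub_le K 1) j)) *
        ((Matrix.of fun (i : Fin (K - 1)) (j : Fin K) =>
            if (j : ℕ) = (i : ℕ) then (1 : ℝ) else if (j : ℕ) = K - 1 then -1 else 0) * B *
         (Matrix.of fun (i : Fin (K - 1)) (j : Fin K) =>
            if (j : ℕ) = (i : ℕ) then (1 : ℝ) else if (j : ℕ) = K - 1 then -1 else 0)ᵀ) *
        (Piperp n * Matrix.of fun i (j : Fin (K - 1)) =>
            X i (Fin.castLE (Nat.sub_le K 1) j))ᵀ) ∧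
    -- all singular values of J lie in [1, √K]
    (1 ≤ sigMin (Matrix.of fun (i : Fin (K - 1)) (j : Fin K) =>
        if (j : ℕ) = (i : ℕ) then (1 : ℝ) else if (j : ℕ) = K - 1 then -1 else 0)ᵀ ∧
     spec (Matrix.of fun (i : Fin (K - 1)) (j : Fin K) =>
        if (j : ℕ) = (i : ℕ) then (1 : ℝ) else if (j : ℕ) = K - 1 then -1 else 0) ≤
      Real.sqrt K) := by
  obtain ⟨m, rfl⟩ : ∃ m, K = m + 1 := ⟨K - 1, by omega⟩
  exact ⟨piperp_conj_eq_diffLast_conj hrow B, one_le_sigMin_transpose_diffLast (by omega),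
    spec_diffLast_le m⟩

/-- **reduction for membership-type matrices.**
Let `K ≥ 2`, let `X ∈ ℝ^{n×K}` have rows summing to one, and let `B ∈ ℝ^{K×K}` be
symmetric.  With `X̆` the first `K-1` columns of `X` and `J = [I_{K-1} | -1_{K-1}]`:
(i) `Π^⊥ X B Xᵀ Π^⊥ = (Π^⊥ X̆)(J B Jᵀ)(Π^⊥ X̆)ᵀ`, and
(ii) all singular values of `J` lie in `[1, √K]`. -/
theorem membership_reduction
    (n K : ℕ) (hK : 2 ≤ K)
    (X : Matrix (Fin n) (Fin K) ℝ)
    (hrow : X.mulVec (fun _ => (1 : ℝ)) = fun _ => (1 : ℝ))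
    (B : Matrix (Fin K) (Fin K) ℝ) (hBsym : Bᵀ = B) :
    -- X̆ : the first K-1 columns of X;  J = [I_{K-1} | -1_{K-1}]
    (Piperp n * (X * B * Xᵀ) * Piperp n =
      (Piperp n * Matrix.of fun i (j : Fin (K - 1)) => X i (Fin.castLE (Nat.sub_le K 1) j)) *
        ((Matrix.of fun (i : Fin (K - 1)) (j : Fin K) =>
            if (j : ℕ) = (i : ℕ) then (1 : ℝ) else if (j : ℕ) = K - 1 then -1 else 0) * B *
         (Matrix.of fun (i : Fin (K - 1)) (j : Fin K) =>
            if (j : ℕ) = (i : ℕ) then (1 : ℝ) else if (j : ℕ) = K - 1 then -1 else 0)ᵀ) *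
        (Piperp n * Matrix.of fun i (j : Fin (K - 1)) =>
            X i (Fin.castLE (Nat.sub_le K 1) j))ᵀ) ∧
    -- all singular values of J lie in [1, √K]
    (1 ≤ sigMin (Matrix.of fun (i : Fin (K - 1)) (j : Fin K) =>
        if (j : ℕ) = (i : ℕ) then (1 : ℝ) else if (j : ℕ) = K - 1 then -1 else 0)ᵀ ∧
     spec (Matrix.of fun (i : Fin (K - 1)) (j : Fin K) =>
        if (j : ℕ) = (i : ℕ) then (1 : ℝ) else if (j : ℕ) = K - 1 then -1 else 0) ≤
      Real.sqrt K) :=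
  membership_reduction_general n K hK X hrow B

end SGRDPG
end
end

section
/- Let S ∈ {0,1}^{L×M} be a clustering matrix (exactly one entry equal to 1 in each row) such that every cluster has size at least L₀ ≥ 1 (each column of S has at least L₀ ones), and let F ∈ ℝ^{M×d} be any matrix. Then the M-th largest singular value of S·F ∈ ℝ^{L×d} satisfies σ_M(S·F)² ≥ L₀·λ_min(F·F^T). -/
/-!
If `λ := λ_min(F Fᵀ) ≤ 0` there is nothing to prove. Otherwise `Fᵀ` is injective, so
`V := range Fᵀ` is `M`-dimensional, and by the max-min characterization it suffices to show
`‖S F x‖² ≥ L₀ λ ‖x‖²` on `V`. For `x = Fᵀ y` we have `S F x = S (F Fᵀ y)`, and `S` repeats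
every coordinate at least `L₀` times, so `‖S F x‖² ≥ L₀ ‖F Fᵀ y‖²`. Finally
`λ · yᵀ F Fᵀ y ≤ ‖F Fᵀ y‖²`, combining `λ ‖y‖² ≤ yᵀ F Fᵀ y` with Cauchy–Schwarz
`(yᵀ F Fᵀ y)² ≤ ‖y‖² ‖F Fᵀ y‖²`.
-/

open Matrix

noncomputable section

namespace SGRDPG

/-- Smallest eigenvalue (of a symmetric matrix), via the Rayleigh quotient. -/
def lamMin {d : ℕ} (A : Matrix (Fin d) (Fin d) ℝ) : ℝ :=
  sInf {c | ∃ x : Fin d → ℝ, sqnorm x = 1 ∧ c = ∑ i, x i * A.mulVec x i}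

/-- The `k`-th largest eigenvalue of a symmetric matrix, via the Courant-Fischer
max-min characterization. -/
def lamK {d : ℕ} (k : ℕ) (A : Matrix (Fin d) (Fin d) ℝ) : ℝ :=
  sSup {c | ∃ V : Submodule ℝ (Fin d → ℝ), Module.finrank ℝ V = k ∧
    ∀ x ∈ V, c * sqnorm x ≤ ∑ i, x i * A.mulVec x i}

/-- The `k`-th largest singular value of a matrix: `σ_k(A) = √(λ_k(AᵀA))`. -/
def sigK {a b : ℕ} (k : ℕ) (A : Matrix (Fin a) (Fin b) ℝ) : ℝ :=
  Real.sqrt (lamK k (Aᵀ * A))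

/-- Clustering matrix of a label function (exactly one 1 per row). -/
def clustMat {L M : ℕ} (g : Fin L → Fin M) : Matrix (Fin L) (Fin M) ℝ :=
  Matrix.of fun l m => if g l = m then 1 else 0

lemma sqnorm_pos {d : ℕ} {x : Fin d → ℝ} (hx : x ≠ 0) : 0 < sqnorm x := by
  refine (sqnorm_nonneg x).lt_of_ne' ?_
  rwa [show sqnorm x = x ⬝ᵥ x by simp only [sqnorm, dotProduct, sq], Ne,
    dotProduct_self_eq_zero]

lemma sqnorm_smul {d : ℕ} (c : ℝ) (x : Fin d → ℝ) : sqnorm (c • x) = c ^ 2 * sqnorm x := by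
  simp [sqnorm, Finset.mul_sum, mul_pow]

lemma smul_dotProduct_mulVec_smul {d : ℕ} (A : Matrix (Fin d) (Fin d) ℝ) (c : ℝ)
    (x : Fin d → ℝ) : c • x ⬝ᵥ A *ᵥ (c • x) = c ^ 2 * (x ⬝ᵥ A *ᵥ x) := by
  rw [mulVec_smul, smul_dotProduct, dotProduct_smul, smul_eq_mul, smul_eq_mul]
  ring

lemma exists_sqnorm_eq_one_dotProduct_mulVec_eq {d : ℕ} (A : Matrix (Fin d) (Fin d) ℝ)
    {x : Fin d → ℝ} (hx : x ≠ 0) :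
    ∃ u, sqnorm u = 1 ∧ x ⬝ᵥ A *ᵥ x = sqnorm x * (u ⬝ᵥ A *ᵥ u) := by
  have hs := sqnorm_pos hx
  refine ⟨(√(sqnorm x))⁻¹ • x, ?_, ?_⟩
  · rw [sqnorm_smul, inv_pow, Real.sq_sqrt hs.le, inv_mul_cancel₀ hs.ne']
  · rw [smul_dotProduct_mulVec_smul, inv_pow, Real.sq_sqrt hs.le, mul_inv_cancel_left₀ hs.ne']

lemma isCompact_sqnorm_eq_one (d : ℕ) : IsCompact {x : Fin d → ℝ | sqnorm x = 1} := by
  refine (isCompact_closedBall 0 1).of_isClosed_subset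
    (isClosed_eq (by unfold sqnorm; fun_prop) continuous_const) fun x hx => ?_
  rw [mem_closedBall_zero_iff, pi_norm_le_iff_of_nonneg zero_le_one]
  intro i
  have hsq : x i ^ 2 ≤ 1 :=
    hx ▸ Finset.single_le_sum (f := fun j => x j ^ 2) (fun j _ => sq_nonneg _) (Finset.mem_univ i)
  rwa [Real.norm_eq_abs, ← sq_le_one_iff_abs_le_one]

lemma exists_abs_dotProduct_mulVec_le {d : ℕ} (A : Matrix (Fin d) (Fin d) ℝ) :
    ∃ C, ∀ x, |x ⬝ᵥ A *ᵥ x| ≤ C * sqnorm x := by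
  obtain ⟨C, hC⟩ := (isCompact_sqnorm_eq_one d).exists_bound_of_continuousOn
    (f := fun x => x ⬝ᵥ A *ᵥ x) (by fun_prop)
  refine ⟨C, fun x => ?_⟩
  rcases eq_or_ne x 0 with rfl | hx
  · simp [sqnorm]
  obtain ⟨u, hu, hxu⟩ := exists_sqnorm_eq_one_dotProduct_mulVec_eq A hx
  rw [hxu, abs_mul, abs_of_pos (sqnorm_pos hx), mul_comm]
  exact mul_le_mul_of_nonneg_right (hC u hu) (sqnorm_nonneg x)

lemma lamMin_mul_sqnorm_le {d : ℕ} (A : Matrix (Fin d) (Fin d) ℝ) (x : Fin d → ℝ) :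
    lamMin A * sqnorm x ≤ x ⬝ᵥ A *ᵥ x := by
  rcases eq_or_ne x 0 with rfl | hx
  · simp [sqnorm]
  obtain ⟨C, hC⟩ := exists_abs_dotProduct_mulVec_le A
  have hbdd : BddBelow {c | ∃ x : Fin d → ℝ, sqnorm x = 1 ∧ c = x ⬝ᵥ A *ᵥ x} := by
    refine ⟨-C, ?_⟩
    rintro _ ⟨u, hu, rfl⟩
    have hCu := hC u
    rw [hu, mul_one] at hCu
    exact neg_le_of_abs_le hCu
  obtain ⟨u, hu, hxu⟩ := exists_sqnorm_eq_one_dotProduct_mulVec_eq A hx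
  rw [hxu, mul_comm]
  exact mul_le_mul_of_nonneg_left (csInf_le hbdd ⟨u, hu, rfl⟩) (sqnorm_nonneg x)

lemma ne_zero_of_lamMin_pos {d : ℕ} {A : Matrix (Fin d) (Fin d) ℝ} (hA : 0 < lamMin A) :
    d ≠ 0 := by
  -- in dimension `0` the unit sphere is empty and `sInf ∅ = 0`
  rintro rfl
  have hempty : {c | ∃ x : Fin 0 → ℝ, sqnorm x = 1 ∧ c = x ⬝ᵥ A *ᵥ x} = ∅ := by
    ext c
    simp [sqnorm]
  exact hA.ne' (by rw [lamMin]; exact hempty ▸ Real.sInf_empty)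

lemma le_lamK {d k : ℕ} {A : Matrix (Fin d) (Fin d) ℝ} {c : ℝ}
    {V : Submodule ℝ (Fin d → ℝ)} (hk : k ≠ 0) (hV : Module.finrank ℝ V = k)
    (hc : ∀ x ∈ V, c * sqnorm x ≤ x ⬝ᵥ A *ᵥ x) : c ≤ lamK k A := by
  obtain ⟨C, hC⟩ := exists_abs_dotProduct_mulVec_le A
  refine le_csSup ⟨C, ?_⟩ ⟨V, hV, hc⟩
  rintro c' ⟨W, hW, hc'⟩
  obtain ⟨x, hxW, hx⟩ := Submodule.exists_mem_ne_zero_of_ne_bot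
    (Submodule.one_le_finrank_iff.mp (hW ▸ Nat.one_le_iff_ne_zero.mpr hk))
  exact le_of_mul_le_mul_right ((hc' x hxW).trans ((le_abs_self _).trans (hC x)))
    (sqnorm_pos hx)

lemma dotProduct_transpose_mul_self_mulVec {a b : ℕ} (A : Matrix (Fin a) (Fin b) ℝ)
    (x : Fin b → ℝ) : x ⬝ᵥ (Aᵀ * A) *ᵥ x = sqnorm (A *ᵥ x) := by
  rw [← mulVec_mulVec, dotProduct_mulVec, vecMul_transpose]
  simp only [sqnorm, dotProduct, sq]

lemma dotProduct_mul_transpose_mulVec {a b : ℕ} (A : Matrix (Fin a) (Fin b) ℝ)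
    (x : Fin a → ℝ) : x ⬝ᵥ (A * Aᵀ) *ᵥ x = sqnorm (Aᵀ *ᵥ x) := by
  simpa using dotProduct_transpose_mul_self_mulVec Aᵀ x

lemma lamMin_mul_dotProduct_mulVec_le {d : ℕ} {A : Matrix (Fin d) (Fin d) ℝ}
    (hA : 0 ≤ lamMin A) (y : Fin d → ℝ) : lamMin A * (y ⬝ᵥ A *ᵥ y) ≤ sqnorm (A *ᵥ y) := by
  rcases eq_or_ne y 0 with rfl | hy
  · simp [sqnorm]
  set q := y ⬝ᵥ A *ᵥ y
  have hray : lamMin A * sqnorm y ≤ q := lamMin_mul_sqnorm_le A y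
  have hq : 0 ≤ q := (mul_nonneg hA (sqnorm_nonneg y)).trans hray
  have hcs : q ^ 2 ≤ sqnorm y * sqnorm (A *ᵥ y) := Finset.sum_mul_sq_le_sq_mul_sq _ _ _
  refine le_of_mul_le_mul_left ?_ (sqnorm_pos hy)
  calc sqnorm y * (lamMin A * q) = lamMin A * sqnorm y * q := by ring
    _ ≤ q ^ 2 := by rw [sq]; exact mul_le_mul_of_nonneg_right hray hq
    _ ≤ sqnorm y * sqnorm (A *ᵥ y) := hcs

lemma mulVecLin_transpose_injective_of_lamMin_pos {a b : ℕ} {A : Matrix (Fin a) (Fin b) ℝ}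
    (hA : 0 < lamMin (A * Aᵀ)) : Function.Injective Aᵀ.mulVecLin := by
  rw [injective_iff_map_eq_zero]
  intro x hx
  by_contra hx0
  have hq := lamMin_mul_sqnorm_le (A * Aᵀ) x
  rw [dotProduct_mul_transpose_mulVec, ← mulVecLin_apply, hx,
    show sqnorm (0 : Fin b → ℝ) = 0 by simp [sqnorm]] at hq
  exact hq.not_gt (mul_pos hA (sqnorm_pos hx0))

lemma clustMat_mulVec {L M : ℕ} (g : Fin L → Fin M) (v : Fin M → ℝ) :
    clustMat g *ᵥ v = fun l => v (g l) := by
  ext l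
  simp [clustMat, mulVec, dotProduct]

lemma le_sqnorm_clustMat_mulVec {L M L₀ : ℕ} {g : Fin L → Fin M}
    (hsize : ∀ m : Fin M, L₀ ≤ (Finset.univ.filter fun l => g l = m).card) (v : Fin M → ℝ) :
    L₀ * sqnorm v ≤ sqnorm (clustMat g *ᵥ v) := by
  calc L₀ * sqnorm v = ∑ m, (L₀ : ℝ) * v m ^ 2 := Finset.mul_sum _ _ _
    _ ≤ ∑ m, ∑ _l ∈ Finset.univ.filter fun l => g l = m, v m ^ 2 := by
        refine Finset.sum_le_sum fun m _ => ?_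
        rw [Finset.sum_const, nsmul_eq_mul]
        gcongr
        exact hsize m
    _ = sqnorm (clustMat g *ᵥ v) := by
        rw [Finset.sum_fiberwise' _ g (fun m => v m ^ 2), clustMat_mulVec]
        rfl

theorem clustering_matrix_singular_value_bound_general
    (L M d L₀ : ℕ)
    (g : Fin L → Fin M)
    (hsize : ∀ m : Fin M, L₀ ≤ (Finset.univ.filter fun l => g l = m).card)
    (F : Matrix (Fin M) (Fin d) ℝ) :
    (L₀ : ℝ) * lamMin (F * Fᵀ) ≤ (sigK M (clustMat g * F)) ^ 2 := by
  rcases le_or_gt (lamMin (F * Fᵀ)) 0 with hF | hF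
  · exact (mul_nonpos_of_nonneg_of_nonpos L₀.cast_nonneg hF).trans (sq_nonneg _)
  have hbound : ∀ x ∈ LinearMap.range Fᵀ.mulVecLin, L₀ * lamMin (F * Fᵀ) * sqnorm x ≤
      x ⬝ᵥ ((clustMat g * F)ᵀ * (clustMat g * F)) *ᵥ x := by
    rintro _ ⟨y, rfl⟩
    calc L₀ * lamMin (F * Fᵀ) * sqnorm (Fᵀ *ᵥ y)
        = L₀ * (lamMin (F * Fᵀ) * (y ⬝ᵥ (F * Fᵀ) *ᵥ y)) := by
          rw [dotProduct_mul_transpose_mulVec, mul_assoc]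
      _ ≤ L₀ * sqnorm ((F * Fᵀ) *ᵥ y) := by
          gcongr; exact lamMin_mul_dotProduct_mulVec_le hF.le y
      _ ≤ sqnorm (clustMat g *ᵥ ((F * Fᵀ) *ᵥ y)) := le_sqnorm_clustMat_mulVec hsize _
      _ = _ := by
          rw [dotProduct_transpose_mul_self_mulVec, mulVecLin_apply, mulVec_mulVec,
            mulVec_mulVec, Matrix.mul_assoc]
  have hrank : Module.finrank ℝ (LinearMap.range Fᵀ.mulVecLin) = M := by
    rw [LinearMap.finrank_range_of_inj (mulVecLin_transpose_injective_of_lamMin_pos hF),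
      Module.finrank_fin_fun]
  have hσ := le_lamK (ne_zero_of_lamMin_pos hF) hrank hbound
  rw [sigK, Real.sq_sqrt (hσ.trans' (by positivity))]
  exact hσ

/-- **singular value lower bound for `S F`.**
If `S ∈ {0,1}^{L×M}` is a clustering matrix all of whose clusters have size at least
`L₀ ≥ 1`, and `F ∈ ℝ^{M×d}`, then `σ_M(S F)² ≥ L₀ λ_min(F Fᵀ)`. -/
theorem clustering_matrix_singular_value_bound
    (L M d L₀ : ℕ) (hL₀ : 1 ≤ L₀)
    (g : Fin L → Fin M)
    (hsize : ∀ m : Fin M, L₀ ≤ (Finset.univ.filter fun l => g l = m).card)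
    (F : Matrix (Fin M) (Fin d) ℝ) :
    (L₀ : ℝ) * lamMin (F * Fᵀ) ≤ (sigK M (clustMat g * F)) ^ 2 :=
  clustering_matrix_singular_value_bound_general L M d L₀ g hsize F

end SGRDPG
end
end
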